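/- Let p, q ≥ 1, ε > 0 and let α : ℂ^{p+q} → ℂ be analytic on the open ball B_{p+q}(ε). Suppose there is a nonempty open subset W of the real ball { a ∈ ℝ^q : ‖a‖ < ε } such that α(u, a) = 0 for every a ∈ W and every u ∈ ℂ^p with (u, a) ∈ B_{p+q}(ε). Then α is identically zero on B_{p+q}(ε). -/

import Mathlib

/-!
The ball is connected, so by the identity theorem it suffices that `α` vanishes on a small
sup-norm ball, i.e. a polydisc, around the real point `(0, a₀)` with `a₀ ∈ W`. There `α` vanishes
at every real point, since the last `q` coordinates of a real point close to `(0, a₀)` lie in `W`.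
A function analytic on a polydisc centred at a real point and vanishing at its real points
vanishes identically: complexify one coordinate at a time, each time using that a holomorphic
function of one variable vanishing on a real interval vanishes on the disc around it.
-/

open Metric Set Filter Topology

section

variable {E : Type*} [NormedAddCommGroup E] [NormedSpace ℂ E]

theorem AnalyticOnNhd.eqOn_zero_of_ofReal_eq_zero {f : ℂ → E} {a r : ℝ}
    (hf : AnalyticOnNhd ℂ f (ball (a : ℂ) r)) (hzero : ∀ t ∈ ball a r, f t = 0) :
    EqOn f 0 (ball (a : ℂ) r) := by
  rcases le_or_gt r 0 with hr | hr
  · simp [ball_eq_empty.2 hr]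
  have hofReal : Tendsto ((↑) : ℝ → ℂ) (𝓝[≠] a) (𝓝[≠] (a : ℂ)) :=
    Complex.continuous_ofReal.continuousWithinAt.tendsto_nhdsWithin fun _ ↦ by simp
  refine hf.eqOn_zero_of_preconnected_of_frequently_eq_zero (convex_ball _ _).isPreconnected
    (mem_ball_self hr) (hofReal.frequently ?_)
  exact (eventually_nhdsWithin_of_eventually_nhds (ball_mem_nhds a hr)).frequently.mono hzero

theorem dist_ofReal_pi {ι : Type*} [Fintype ι] (x y : ι → ℝ) :
    dist (fun i ↦ (x i : ℂ)) (fun i ↦ (y i : ℂ)) = dist x y :=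
  Complex.isometry_ofReal.postcomp_pi.dist_eq x y

theorem analyticAt_update {𝕜 F ι : Type*} [NontriviallyNormedField 𝕜] [NormedAddCommGroup F]
    [NormedSpace 𝕜 F] [Fintype ι] [DecidableEq ι] (z : ι → F) (j : ι) (w : F) :
    AnalyticAt 𝕜 (Function.update z j) w := by
  refine AnalyticAt.pi fun i ↦ ?_
  rcases eq_or_ne i j with rfl | hij
  · simp only [Function.update_self]
    exact analyticAt_id
  · simpa [Function.update_of_ne hij] using analyticAt_const

theorem AnalyticOnNhd.eqOn_zero_of_pi_ofReal_eq_zero {ι : Type*} [Fintype ι]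
    {f : (ι → ℂ) → E} {a : ι → ℝ} {r : ℝ}
    (hf : AnalyticOnNhd ℂ f (ball (fun i ↦ (a i : ℂ)) r))
    (hzero : ∀ x ∈ ball a r, f (fun i ↦ x i) = 0) :
    EqOn f 0 (ball (fun i ↦ (a i : ℂ)) r) := by
  classical
  rcases le_or_gt r 0 with hr | hr
  · simp [ball_eq_empty.2 hr]
  set c : ι → ℂ := fun i ↦ a i
  have hupdate : ∀ z ∈ ball c r, ∀ j, MapsTo (Function.update z j) (ball (c j) r) (ball c r) := by
    intro z hz j w hw
    rw [ball_pi _ hr] at hz ⊢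
    exact (Set.update_mem_pi_iff_of_mem hz).2 fun _ ↦ hw
  suffices key : ∀ s : Finset ι, ∀ z ∈ ball c r, (∀ i ∉ s, (z i).im = 0) → f z = 0 from
    fun z hz ↦ key Finset.univ z hz (by simp)
  intro s
  induction s using Finset.induction_on with
  | empty =>
    intro z hz hreal
    have hz_eq : z = fun i ↦ ((z i).re : ℂ) := funext fun i ↦ Complex.ext rfl (by simp [hreal i])
    rw [hz_eq] at hz ⊢
    exact hzero _ (by rwa [mem_ball, ← dist_ofReal_pi])
  | insert j s _ ih =>
    intro z hz hreal
    have hslice : EqOn (fun w ↦ f (Function.update z j w)) 0 (ball (c j) r) := by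
      refine AnalyticOnNhd.eqOn_zero_of_ofReal_eq_zero
        (hf.comp (fun w _ ↦ analyticAt_update z j w) (hupdate z hz j)) fun t ht ↦ ?_
      refine ih _ (hupdate z hz j ?_) fun i hi ↦ ?_
      · rwa [mem_ball, Complex.isometry_ofReal.dist_eq]
      · rcases eq_or_ne i j with rfl | hij
        · simp
        · simpa [Function.update_of_ne hij] using hreal i (by simp [hij, hi])
    simpa only [Function.update_eq_self, Pi.zero_apply] using
      hslice ((dist_le_pi_dist z c j).trans_lt hz)

end

theorem Fin.norm_append_le {E : Type*} [SeminormedAddGroup E] {m n : ℕ} (u : Fin m → E)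
    (v : Fin n → E) : ‖Fin.append u v‖ ≤ max ‖u‖ ‖v‖ := by
  refine (pi_norm_le_iff_of_nonneg (by positivity)).2 fun j ↦ Fin.addCases (fun i ↦ ?_) (fun i ↦ ?_) j
  · simpa using (norm_le_pi_norm u i).trans (le_max_left _ _)
  · simpa using (norm_le_pi_norm v i).trans (le_max_right _ _)

theorem statement1_general (p q : ℕ) (ε : ℝ)
    (α : (Fin (p + q) → ℂ) → ℂ)
    (hα : AnalyticOnNhd ℂ α (ball (0 : Fin (p + q) → ℂ) ε))
    (W : Set (Fin q → ℝ)) (hWopen : IsOpen W) (hWne : W.Nonempty)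
    (hWsub : W ⊆ {a : Fin q → ℝ | ‖a‖ < ε})
    (hzero : ∀ a ∈ W, ∀ u : Fin p → ℂ,
      Fin.append u (fun i => ((a i : ℂ))) ∈ ball (0 : Fin (p + q) → ℂ) ε →
      α (Fin.append u (fun i => ((a i : ℂ)))) = 0) :
    ∀ z ∈ ball (0 : Fin (p + q) → ℂ) ε, α z = 0 := by
  obtain ⟨a₀, ha₀⟩ := hWne
  obtain ⟨r₁, hr₁, hr₁W⟩ := isOpen_iff.1 hWopen a₀ ha₀
  set r := min r₁ (ε - ‖a₀‖)
  have hr : 0 < r := lt_min hr₁ (sub_pos.2 (hWsub ha₀))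
  set x₀ : Fin (p + q) → ℝ := Fin.append 0 a₀
  have hsub : ball (fun i ↦ (x₀ i : ℂ)) r ⊆ ball 0 ε := by
    have hx₀ : dist (fun i ↦ (x₀ i : ℂ)) 0 ≤ ‖a₀‖ := by
      rw [show dist (fun i ↦ (x₀ i : ℂ)) 0 = dist x₀ 0 from dist_ofReal_pi x₀ 0, dist_zero_right]
      simpa using Fin.norm_append_le (0 : Fin p → ℝ) a₀
    exact ball_subset_ball' (by linarith [min_le_right r₁ (ε - ‖a₀‖)])
  have hnear : EqOn α 0 (ball (fun i ↦ (x₀ i : ℂ)) r) := by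
    refine (hα.mono hsub).eqOn_zero_of_pi_ofReal_eq_zero fun x hx ↦ ?_
    have hxW : (fun i ↦ x (Fin.natAdd p i)) ∈ W := by
      refine hr₁W ((dist_pi_le_iff dist_nonneg).2 (fun i ↦ ?_) |>.trans_lt
        (hx.trans_le (min_le_left _ _)))
      simpa [x₀] using dist_le_pi_dist x x₀ (Fin.natAdd p i)
    have hmem : (fun i ↦ (x i : ℂ)) ∈ ball 0 ε := hsub (by rwa [mem_ball, dist_ofReal_pi])
    rw [← Fin.append_castAdd_natAdd (f := fun i ↦ (x i : ℂ))] at hmem ⊢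
    exact hzero _ hxW _ hmem
  exact fun z hz ↦ hα.eqOn_zero_of_preconnected_of_eventuallyEq_zero
    (convex_ball _ _).isPreconnected (hsub (mem_ball_self hr))
    (eventuallyEq_of_mem (ball_mem_nhds _ hr) hnear) hz

/-- Let `p, q ≥ 1`, `ε > 0` and let `α : ℂ^{p+q} → ℂ` be analytic on the open
ball `B_{p+q}(ε)`. Suppose there is a nonempty open subset `W` of the real ball
`{a ∈ ℝ^q : ‖a‖ < ε}` such that `α(u, a) = 0` for every `a ∈ W` and every `u ∈ ℂ^p` with
`(u, a) ∈ B_{p+q}(ε)`. Then `α` is identically zero on `B_{p+q}(ε)`. -/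
theorem statement1 (p q : ℕ) (hp : 1 ≤ p) (hq : 1 ≤ q) (ε : ℝ) (hε : 0 < ε)
    (α : (Fin (p + q) → ℂ) → ℂ)
    (hα : AnalyticOnNhd ℂ α (ball (0 : Fin (p + q) → ℂ) ε))
    (W : Set (Fin q → ℝ)) (hWopen : IsOpen W) (hWne : W.Nonempty)
    (hWsub : W ⊆ {a : Fin q → ℝ | ‖a‖ < ε})
    (hzero : ∀ a ∈ W, ∀ u : Fin p → ℂ,
      Fin.append u (fun i => ((a i : ℂ))) ∈ ball (0 : Fin (p + q) → ℂ) ε →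
      α (Fin.append u (fun i => ((a i : ℂ)))) = 0) :
    ∀ z ∈ ball (0 : Fin (p + q) → ℂ) ε, α z = 0 :=
  statement1_general p q ε α hα W hWopen hWne hWsub hzero
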